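/- If a single item has transaction-weighted utility below the least minimum utility value, then no itemset containing it is an HTWUI or an HUI: if i ∈ I satisfies TWU({i}) < LMU, then every nonempty itemset X ⊆ I with i ∈ X satisfies TWU(X) < MIU(X) and u(X) < MIU(X). -/

import Mathlib

open Finset

variable {ι τ : Type*}

/-- Utility of item `i` in transaction `t`: quantity times unit profit. -/
def itemU (pr : ι → ℝ) (q : ι → τ → ℕ) (i : ι) (t : τ) : ℝ :=
  (q i t : ℝ) * pr i

/-- Utility of itemset `X` in transaction `t`. -/
def setU (pr : ι → ℝ) (q : ι → τ → ℕ) (X : Finset ι) (t : τ) : ℝ :=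
  ∑ i ∈ X, itemU pr q i t

/-- Transaction utility of transaction `t` (with item set `Tr t`). -/
def tu (pr : ι → ℝ) (q : ι → τ → ℕ) (Tr : τ → Finset ι) (t : τ) : ℝ :=
  ∑ i ∈ Tr t, itemU pr q i t

/-- Transaction-weighted utility of itemset `X` in database `D`. -/
def TWU [DecidableEq ι] (pr : ι → ℝ) (q : ι → τ → ℕ) (Tr : τ → Finset ι)
    (D : Finset τ) (X : Finset ι) : ℝ :=
  ∑ t ∈ D.filter (fun t => X ⊆ Tr t), tu pr q Tr t

/-- Utility of itemset `X` in database `D`. -/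
def dbU [DecidableEq ι] (pr : ι → ℝ) (q : ι → τ → ℕ) (Tr : τ → Finset ι)
    (D : Finset τ) (X : Finset ι) : ℝ :=
  ∑ t ∈ D.filter (fun t => X ⊆ Tr t), setU pr q X t

/-- Minimum itemset utility of a nonempty itemset `X`. -/
def MIU (mu : ι → ℝ) (X : Finset ι) (hX : X.Nonempty) : ℝ :=
  X.inf' hX mu

/-- Remaining utility of itemset `X` in transaction `t`: total utility of the items of
`Tr t` that come strictly after every item of `X`. -/
def ru [LinearOrder ι] (pr : ι → ℝ) (q : ι → τ → ℕ) (Tr : τ → Finset ι)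
    (X : Finset ι) (t : τ) : ℝ :=
  ∑ i ∈ (Tr t).filter (fun i => ∀ x ∈ X, x < i), itemU pr q i t

/-- Sum of the remaining utilities of itemset `X` over the database `D` (`X.RU`). -/
def dbRU [LinearOrder ι] (pr : ι → ℝ) (q : ι → τ → ℕ) (Tr : τ → Finset ι)
    (D : Finset τ) (X : Finset ι) : ℝ :=
  ∑ t ∈ D.filter (fun t => X ⊆ Tr t), ru pr q Tr X t

section Monotonicity

variable {pr : ι → ℝ} (q : ι → τ → ℕ) (hpr : ∀ i, 0 ≤ pr i)
include hpr

lemma itemU_nonneg (i : ι) (t : τ) : 0 ≤ itemU pr q i t :=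
  mul_nonneg (Nat.cast_nonneg _) (hpr i)

lemma setU_le_tu (Tr : τ → Finset ι) {X : Finset ι} {t : τ} (hX : X ⊆ Tr t) :
    setU pr q X t ≤ tu pr q Tr t :=
  sum_le_sum_of_subset_of_nonneg hX fun i _ _ => itemU_nonneg q hpr i t

lemma dbU_le_TWU [DecidableEq ι] (Tr : τ → Finset ι) (D : Finset τ) (X : Finset ι) :
    dbU pr q Tr D X ≤ TWU pr q Tr D X :=
  sum_le_sum fun _ ht => setU_le_tu q hpr Tr (mem_filter.mp ht).2

lemma TWU_anti [DecidableEq ι] (Tr : τ → Finset ι) (D : Finset τ) {X Y : Finset ι}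
    (hXY : X ⊆ Y) :
    TWU pr q Tr D Y ≤ TWU pr q Tr D X :=
  sum_le_sum_of_subset_of_nonneg (monotone_filter_right D fun _ _ hY => hXY.trans hY)
    fun _ _ _ => sum_nonneg fun i _ => itemU_nonneg q hpr i _

end Monotonicity

lemma MIU_anti (mu : ι → ℝ) {X Y : Finset ι} (hXY : X ⊆ Y) (hX : X.Nonempty) :
    MIU mu Y (hX.mono hXY) ≤ MIU mu X hX :=
  inf'_mono mu hXY hX

theorem single_item_below_LMU_prunes_general [DecidableEq ι] (I : Finset ι) (hI : I.Nonempty)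
    (pr mu : ι → ℝ) (hpr : ∀ i, 0 ≤ pr i)
    (D : Finset τ) (Tr : τ → Finset ι) (q : ι → τ → ℕ)
    (i : ι)
    (hlow : TWU pr q Tr D {i} < MIU mu I hI)
    (X : Finset ι) (hX : X.Nonempty) (hiX : i ∈ X) (hXI : X ⊆ I) :
    TWU pr q Tr D X < MIU mu X hX ∧ dbU pr q Tr D X < MIU mu X hX := by
  have hTWU : TWU pr q Tr D X < MIU mu X hX :=
    calc TWU pr q Tr D X ≤ TWU pr q Tr D {i} :=
          TWU_anti q hpr Tr D (singleton_subset_iff.mpr hiX)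
      _ < MIU mu I hI := hlow
      _ ≤ MIU mu X hX := MIU_anti mu hXI hX
  exact ⟨hTWU, (dbU_le_TWU q hpr Tr D X).trans_lt hTWU⟩

/-- if the TWU of a single item is below `LMU = min_{i ∈ I} mu(i)`, then no
itemset containing it is an HTWUI or an HUI. -/
theorem single_item_below_LMU_prunes [DecidableEq ι] (I : Finset ι) (hI : I.Nonempty)
    (pr mu : ι → ℝ) (hpr : ∀ i, 0 ≤ pr i) (hmu : ∀ i, 0 < mu i)
    (D : Finset τ) (Tr : τ → Finset ι) (q : ι → τ → ℕ)
    (hq : ∀ t ∈ D, ∀ i ∈ Tr t, 0 < q i t) (hTr : ∀ t ∈ D, Tr t ⊆ I)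
    (i : ι) (hiI : i ∈ I)
    (hlow : TWU pr q Tr D {i} < MIU mu I hI)
    (X : Finset ι) (hX : X.Nonempty) (hiX : i ∈ X) (hXI : X ⊆ I) :
    TWU pr q Tr D X < MIU mu X hX ∧ dbU pr q Tr D X < MIU mu X hX :=
  single_item_below_LMU_prunes_general I hI pr mu hpr D Tr q i hlow X hX hiX hXI
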